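/- Let n = n_x + n_y, and let Q_{ij} (i,j = 1,2,3) be 3×3 blocks of a 9×9 orthogonal matrix Q (i.e., Q^T Q = I_9 where Q has block rows [Q_{1j}], [Q_{2j}], [Q_{3j}]). Let V (3×3n_x), W (3×3n_y) have orthonormal rows orthogonal to I_{n_x}, I_{n_y} respectively. Then the 3×3n matrix U = [Q_{11}^T V + √(n_y/n) Q_{13}^T I_{n_x}, Q_{12}^T W − √(n_x/n) Q_{13}^T I_{n_y}] has orthonormal rows, and its rows are orthogonal to the rows of I_{n_p} = [√(n_x/n) I_{n_x}, √(n_y/n) I_{n_y}]. -/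

import Mathlib

open Matrix

noncomputable def Imat (n : ℕ) : Matrix (Fin 3) (Fin n × Fin 3) ℝ :=
  fun a p => (1 / Real.sqrt n) * (if a = p.2 then 1 else 0)

/-- The `9 × 9` matrix whose `(i,j)` block is `(Q i j)ᵀ`, as in the
hierarchical QR factorization. -/
def bigQT (Q : Fin 3 → Fin 3 → Matrix (Fin 3) (Fin 3) ℝ) :
    Matrix (Fin 3 ⊕ Fin 3 ⊕ Fin 3) (Fin 3 ⊕ Fin 3 ⊕ Fin 3) ℝ :=
  fun i j =>
    match i, j with
    | .inl a, .inl b => (Q 0 0)ᵀ a b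
    | .inl a, .inr (.inl b) => (Q 0 1)ᵀ a b
    | .inl a, .inr (.inr b) => (Q 0 2)ᵀ a b
    | .inr (.inl a), .inl b => (Q 1 0)ᵀ a b
    | .inr (.inl a), .inr (.inl b) => (Q 1 1)ᵀ a b
    | .inr (.inl a), .inr (.inr b) => (Q 1 2)ᵀ a b
    | .inr (.inr a), .inl b => (Q 2 0)ᵀ a b
    | .inr (.inr a), .inr (.inl b) => (Q 2 1)ᵀ a b
    | .inr (.inr a), .inr (.inr b) => (Q 2 2)ᵀ a b

/-- The parent's normalized identity block `[√(nx/n) I_{nx}, √(ny/n) I_{ny}]`. -/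
noncomputable def InpCat (nx ny : ℕ) :
    Matrix (Fin 3) ((Fin nx × Fin 3) ⊕ (Fin ny × Fin 3)) ℝ :=
  Matrix.of fun a =>
    Sum.elim (fun c => Real.sqrt ((nx : ℝ) / (nx + ny)) * Imat nx a c)
             (fun c => Real.sqrt ((ny : ℝ) / (nx + ny)) * Imat ny a c)

/-- The parent's `U` block
`[Q₁₁ᵀ V + √(ny/n) Q₁₃ᵀ I_{nx}, Q₁₂ᵀ W − √(nx/n) Q₁₃ᵀ I_{ny}]`. -/
noncomputable def Upar {nx ny : ℕ} (Q : Fin 3 → Fin 3 → Matrix (Fin 3) (Fin 3) ℝ)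
    (V : Matrix (Fin 3) (Fin nx × Fin 3) ℝ)
    (W : Matrix (Fin 3) (Fin ny × Fin 3) ℝ) :
    Matrix (Fin 3) ((Fin nx × Fin 3) ⊕ (Fin ny × Fin 3)) ℝ :=
  Matrix.of fun a =>
    Sum.elim
      (((Q 0 0)ᵀ * V + Real.sqrt ((ny : ℝ) / (nx + ny)) • ((Q 0 2)ᵀ * Imat nx)) a)
      (((Q 0 1)ᵀ * W - Real.sqrt ((nx : ℝ) / (nx + ny)) • ((Q 0 2)ᵀ * Imat ny)) a)

/- With `A, B, C` the first block row of `bigQT Q`, the rows of `bigQT Q` being orthonormal gives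
`A Aᵀ + B Bᵀ + C Cᵀ = 1`. Since the rows of `V` and of `I_{nx}` are orthonormal and mutually
orthogonal, the left block `A V + √(ny/n) C I_{nx}` of `U` has Gram matrix `A Aᵀ + (ny/n) C Cᵀ`,
and likewise the right block has `B Bᵀ + (nx/n) C Cᵀ`; these add up to `1`. Against `I_{n_p}` the
`V`, `W` parts vanish and the two `C` contributions `±√(nx ny)/n · C` cancel. -/

section GramOfOrthogonalSum

variable {m k n R : Type*} [Fintype k] [Fintype n] [DecidableEq k] [CommRing R]
  (A C : Matrix m k R) {V I : Matrix k n R} (s : R)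

theorem mul_add_smul_mul_mul_transpose_self (hV : V * Vᵀ = 1) (hVI : V * Iᵀ = 0)
    (hI : I * Iᵀ = 1) :
    (A * V + s • (C * I)) * (A * V + s • (C * I))ᵀ = A * Aᵀ + (s * s) • (C * Cᵀ) := by
  have hIV : I * Vᵀ = 0 := by rw [← transpose_transpose I, ← transpose_mul, hVI, transpose_zero]
  simp only [transpose_add, transpose_smul, transpose_mul, Matrix.add_mul, Matrix.mul_add,
    Matrix.mul_smul, Matrix.smul_mul, smul_smul, Matrix.mul_assoc, ← Matrix.mul_assoc V,
    ← Matrix.mul_assoc I, hV, hVI, hI, hIV, Matrix.one_mul, Matrix.zero_mul, Matrix.mul_zero, smul_zero, add_zero, zero_add]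

theorem mul_add_smul_mul_mul_transpose (hVI : V * Iᵀ = 0) (hI : I * Iᵀ = 1) :
    (A * V + s • (C * I)) * Iᵀ = s • C := by
  rw [Matrix.add_mul, Matrix.mul_assoc, hVI, Matrix.mul_zero, zero_add, Matrix.smul_mul,
    Matrix.mul_assoc, hI, Matrix.mul_one]

end GramOfOrthogonalSum

theorem Imat_mul_transpose_self {n : ℕ} (hn : 1 ≤ n) : Imat n * (Imat n)ᵀ = 1 := by
  have hn' : (n : ℝ) ≠ 0 := by positivity
  ext a b
  simp only [mul_apply, Imat, transpose_apply, one_apply, Fintype.sum_prod_type]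
  rw [Finset.sum_comm]
  by_cases hab : a = b
  · subst hab
    simp [← mul_inv, Real.mul_self_sqrt, hn']
  · simp [hab]

theorem bigQT_firstRow_gram (Q : Fin 3 → Fin 3 → Matrix (Fin 3) (Fin 3) ℝ)
    (hQ : bigQT Q * (bigQT Q)ᵀ = 1) :
    (Q 0 0)ᵀ * Q 0 0 + (Q 0 1)ᵀ * Q 0 1 + (Q 0 2)ᵀ * Q 0 2 = 1 := by
  ext a b
  have h := congrFun₂ hQ (Sum.inl a) (Sum.inl b)
  simp only [mul_apply, transpose_apply, Fintype.sum_sum_type, bigQT, one_apply,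
    Sum.inl.injEq] at h
  simpa [mul_apply, one_apply, add_assoc] using h

theorem Upar_eq_fromCols {nx ny : ℕ} (Q : Fin 3 → Fin 3 → Matrix (Fin 3) (Fin 3) ℝ)
    (V : Matrix (Fin 3) (Fin nx × Fin 3) ℝ) (W : Matrix (Fin 3) (Fin ny × Fin 3) ℝ) :
    Upar Q V W = fromCols ((Q 0 0)ᵀ * V + √(ny / (nx + ny)) • ((Q 0 2)ᵀ * Imat nx))
      ((Q 0 1)ᵀ * W + (-√(nx / (nx + ny))) • ((Q 0 2)ᵀ * Imat ny)) := by
  simp only [neg_smul, ← sub_eq_add_neg]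
  rfl

theorem InpCat_eq_fromCols (nx ny : ℕ) :
    InpCat nx ny = fromCols (√(nx / (nx + ny)) • Imat nx) (√(ny / (nx + ny)) • Imat ny) := by
  ext a (c | c) <;> rfl

theorem mul_self_sqrt_div_add_mul_self_sqrt_div {x y : ℝ} (hx : 0 ≤ x) (hy : 0 ≤ y)
    (hxy : 0 < x + y) :
    √(x / (x + y)) * √(x / (x + y)) + √(y / (x + y)) * √(y / (x + y)) = 1 := by
  rw [Real.mul_self_sqrt (by positivity), Real.mul_self_sqrt (by positivity), ← add_div,
    div_self hxy.ne']

theorem stmt19_general {nx ny : ℕ} (hx : 1 ≤ nx) (hy : 1 ≤ ny)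
    (Q : Fin 3 → Fin 3 → Matrix (Fin 3) (Fin 3) ℝ)
    (hQ2 : bigQT Q * (bigQT Q)ᵀ = 1)
    (V : Matrix (Fin 3) (Fin nx × Fin 3) ℝ)
    (W : Matrix (Fin 3) (Fin ny × Fin 3) ℝ)
    (hV : V * Vᵀ = 1) (hVI : V * (Imat nx)ᵀ = 0)
    (hW : W * Wᵀ = 1) (hWI : W * (Imat ny)ᵀ = 0) :
    Upar Q V W * (Upar Q V W)ᵀ = 1 ∧
      Upar Q V W * (InpCat nx ny)ᵀ = 0 := by
  have hIx := Imat_mul_transpose_self hx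
  have hIy := Imat_mul_transpose_self hy
  have hst := mul_self_sqrt_div_add_mul_self_sqrt_div (Nat.cast_nonneg' nx) (Nat.cast_nonneg' ny)
    (by positivity : (0 : ℝ) < nx + ny)
  have hblock := bigQT_firstRow_gram Q hQ2
  rw [Upar_eq_fromCols, InpCat_eq_fromCols, transpose_fromCols, transpose_fromCols,
    fromCols_mul_fromRows, fromCols_mul_fromRows]
  constructor
  · rw [mul_add_smul_mul_mul_transpose_self _ _ _ hV hVI hIx,
      mul_add_smul_mul_mul_transpose_self _ _ _ hW hWI hIy, ← hblock]
    simp only [transpose_transpose]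
    linear_combination (norm := module) hst • ((Q 0 2)ᵀ * Q 0 2)
  · rw [transpose_smul, transpose_smul, Matrix.mul_smul, Matrix.mul_smul,
      mul_add_smul_mul_mul_transpose _ _ _ hVI hIx, mul_add_smul_mul_mul_transpose _ _ _ hWI hIy,
      smul_smul, smul_smul, mul_neg, neg_smul, mul_comm, add_neg_cancel]

theorem stmt19 {nx ny : ℕ} (hx : 1 ≤ nx) (hy : 1 ≤ ny)
    (Q : Fin 3 → Fin 3 → Matrix (Fin 3) (Fin 3) ℝ)
    (hQ1 : (bigQT Q)ᵀ * bigQT Q = 1) (hQ2 : bigQT Q * (bigQT Q)ᵀ = 1)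
    (V : Matrix (Fin 3) (Fin nx × Fin 3) ℝ)
    (W : Matrix (Fin 3) (Fin ny × Fin 3) ℝ)
    (hV : V * Vᵀ = 1) (hVI : V * (Imat nx)ᵀ = 0)
    (hW : W * Wᵀ = 1) (hWI : W * (Imat ny)ᵀ = 0) :
    Upar Q V W * (Upar Q V W)ᵀ = 1 ∧
      Upar Q V W * (InpCat nx ny)ᵀ = 0 :=
  stmt19_general hx hy Q hQ2 V W hV hVI hW hWI
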